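/- Let g : ℝⁿ → ℝ₊ be a bounded measurable function such that (1) g(ε₁x₁,…,εₙxₙ) = g(x) for all x ∈ ℝⁿ and ε₁,…,εₙ ∈ {−1,1}, and (2) for all x, y ∈ ℝⁿ, if |y_i| ≤ |x_i| for i = 1,…,n then g(y) ≤ g(x). Then Ent_{λ_n} g ≤ ∫_{ℝⁿ} g(x)·(|x|₁ − n) dλ_n(x). -/

import Mathlib

open MeasureTheory Real Set
open scoped ENNReal

/-- Entropy of a nonnegative function `f` w.r.t. a measure `μ`
(with the convention `0 · ln 0 = 0`, via `Real.log 0 = 0`). -/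
noncomputable def entropy {X : Type*} [MeasurableSpace X] (μ : MeasureTheory.Measure X)
    (f : X → ℝ) : ℝ :=
  (∫ x, f x * Real.log (f x) ∂μ) - (∫ x, f x ∂μ) * Real.log (∫ x, f x ∂μ)

/-- The standard exponential measure `λ_n` on `ℝⁿ`, with density
`2⁻ⁿ exp(-|x|₁)` with respect to Lebesgue measure. -/
noncomputable def lamR (n : ℕ) : MeasureTheory.Measure (Fin n → ℝ) :=
  MeasureTheory.volume.withDensity fun x =>
    ENNReal.ofReal (((2 : ℝ) ^ n)⁻¹ * Real.exp (-(∑ i, |x i|)))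

/-!
Write `a = ∫ g dλ₁` and `R(s) = ∫_{|y| > s} g dλ₁`. In dimension one, `g ≥ g(x)` on
`{|y| > |x|}`, a set of `λ₁`-mass `e^{-|x|}`, so `g(x) e^{-|x|} ≤ R(|x|)`; taking logarithms,
`g log (g / a) ≤ g |x| - g log (a / R(|x|))` pointwise. Under the law `g dλ₁ / a`, the ratio
`R(|x|) / a` is the survival function of `|x|` evaluated at `|x|`. As `g` is bounded, `R` is
continuous, so `-log (R(|x|) / a)` dominates an `Exp(1)` variable and
`∫ g log (a / R(|x|)) dλ₁ ≥ a`; integrating the pointwise bound gives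
`Ent g ≤ ∫ g (|x| - 1) dλ₁`.

`λ_n` is the `n`-fold product of `λ₁`, and the chain rule
`Ent_{μ ⊗ ν} f = ∫ Ent_ν f(x, ·) dμ(x) + Ent_μ (∫ f(·, y) dν(y))` tensorises the inequality:
the slices and the marginal of a function monotone in the absolute values of the coordinates
are again monotone in them, so induction on `n` applies.
-/

lemma log_div_nonneg {a r : ℝ} (hr : 0 ≤ r) (hra : r ≤ a) : 0 ≤ log (a / r) := by
  rcases hr.eq_or_lt with rfl | hr
  · simp -- `a / 0 = 0` and `log 0 = 0`
  · exact log_nonneg ((one_le_div hr).mpr hra)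

lemma mul_log_sub_mul_log_le {u v r a : ℝ} (hu : 0 ≤ u) (hr : u * exp (-v) ≤ r) (hra : r ≤ a) :
    u * log u - u * log a ≤ u * v - u * log (a / r) := by
  rcases hu.eq_or_lt with rfl | hu
  · simp
  have hr0 : 0 < r := (by positivity : 0 < u * exp (-v)).trans_le hr
  have hlog : log u - v ≤ log r := by
    simpa [log_mul hu.ne' (exp_pos _).ne'] using log_le_log (by positivity) hr
  rw [log_div (hr0.trans_le hra).ne' hr0.ne']
  nlinarith

lemma lintegral_Ioi_exp_neg (s : ℝ) :
    ∫⁻ x in Ioi s, ENNReal.ofReal (exp (-x)) = ENNReal.ofReal (exp (-s)) := by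
  rw [← ofReal_integral_eq_lintegral_ofReal (exp_neg_integrableOn_Ioi s one_pos |>.congr_fun
    (fun x _ => by simp) measurableSet_Ioi) (ae_of_all _ fun x => (exp_pos _).le),
    integral_exp_neg_Ioi]

section SurvivalFunction

variable {ν : Measure ℝ} [IsFiniteMeasure ν]

lemma antitone_measureReal_Ioi : Antitone fun t => ν.real (Ioi t) :=
  fun _ _ h => measureReal_mono (Ioi_subset_Ioi h)

lemma lipschitzWith_measureReal_Ioi {K : NNReal}
    (hK : ∀ s t, s ≤ t → ν (Ioc s t) ≤ ENNReal.ofReal (K * (t - s))) :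
    LipschitzWith K fun t => ν.real (Ioi t) := by
  refine LipschitzWith.of_le_add_mul K fun s t => ?_
  rcases le_total s t with hst | hts
  · have hsplit : ν.real (Ioi s) = ν.real (Ioc s t) + ν.real (Ioi t) := by
      rw [← Ioc_union_Ioi_eq_Ioi hst, measureReal_union Ioc_disjoint_Ioi_same measurableSet_Ioi]
    have hIoc : ν.real (Ioc s t) ≤ K * (t - s) :=
      ENNReal.toReal_le_of_le_ofReal (by positivity) (by simpa using hK s t hst)
    rw [Real.dist_eq, abs_of_nonpos (by linarith)]
    linarith
  · have : ν.real (Ioi s) ≤ ν.real (Ioi t) := measureReal_mono (Ioi_subset_Ioi hts)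
    have : 0 ≤ (K : ℝ) * dist s t := by positivity
    linarith

lemma exists_measureReal_Ioi_eq (hcont : Continuous fun t => ν.real (Ioi t)) {c : ℝ}
    (hc : 0 < c) (hca : c < ν.real univ) : ∃ s, ν.real (Ioi s) = c := by
  have hbot : Filter.Tendsto (fun t => ν.real (Ioi t)) Filter.atBot (nhds (ν.real univ)) := by
    have := tendsto_measure_iUnion_atBot (μ := ν) (s := Ioi) fun _ _ h => Ioi_subset_Ioi h
    rw [iUnion_Ioi] at this
    exact (ENNReal.tendsto_toReal (measure_ne_top ν _)).comp this
  have htop : Filter.Tendsto (fun t => ν.real (Ioi t)) Filter.atTop (nhds 0) := by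
    have := tendsto_measure_iInter_atTop (μ := ν) (s := Ioi)
      (fun _ => measurableSet_Ioi.nullMeasurableSet) (fun _ _ h => Ioi_subset_Ioi h)
      ⟨0, measure_ne_top ν _⟩
    rw [show ⋂ t : ℝ, Ioi t = ∅ from iInter_eq_empty_iff.mpr fun x => ⟨x, lt_irrefl x⟩,
      measure_empty] at this
    exact ENNReal.toReal_zero ▸ (ENNReal.tendsto_toReal ENNReal.zero_ne_top).comp this
  obtain ⟨s, hs⟩ := (htop.eventually (gt_mem_nhds hc)).exists
  obtain ⟨t, ht⟩ := (hbot.eventually (lt_mem_nhds hca)).exists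
  exact mem_range_of_exists_le_of_exists_ge hcont ⟨s, hs.le⟩ ⟨t, ht.le⟩

lemma measureReal_univ_le_lintegral_log_div_measureReal_Ioi
    (hcont : Continuous fun t => ν.real (Ioi t)) (hpos : ∀ᵐ t ∂ν, 0 < ν.real (Ioi t)) :
    ENNReal.ofReal (ν.real univ)
      ≤ ∫⁻ t, ENNReal.ofReal (log (ν.real univ / ν.real (Ioi t))) ∂ν := by
  set a := ν.real univ
  have ha0 : 0 ≤ a := measureReal_nonneg
  have hS : Antitone fun t => ν.real (Ioi t) := antitone_measureReal_Ioi
  rw [lintegral_eq_lintegral_meas_le ν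
    (ae_of_all _ fun t => log_div_nonneg measureReal_nonneg (measureReal_mono (subset_univ _)))
    (hS.measurable.const_div a).log.aemeasurable]
  calc ENNReal.ofReal a = ∫⁻ u in Ioi 0, ENNReal.ofReal (a * exp (-u)) := by
        simp_rw [ENNReal.ofReal_mul ha0]
        rw [lintegral_const_mul _ (by fun_prop), lintegral_Ioi_exp_neg]
        simp
    _ ≤ ∫⁻ u in Ioi 0, ν {t | u ≤ log (a / ν.real (Ioi t))} := by
        refine setLIntegral_mono' measurableSet_Ioi fun u hu => ?_
        rcases ha0.eq_or_lt with ha | ha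
        · rw [← ha]; simp
        have hc : a * exp (-u) < a :=
          mul_lt_of_lt_one_right ha (exp_lt_one_iff.mpr (by simpa using hu))
        obtain ⟨s, hs⟩ := exists_measureReal_Ioi_eq hcont (by positivity) hc
        rw [← hs, ofReal_measureReal]
        refine measure_mono_ae (hpos.mono fun t ht hts => ?_)
        have hle : ν.real (Ioi t) ≤ a * exp (-u) := hs ▸ hS (le_of_lt hts)
        show u ≤ log (a / ν.real (Ioi t))
        rw [le_log_iff_exp_le (div_pos ha ht), le_div_iff₀ ht]
        calc exp u * ν.real (Ioi t) ≤ exp u * (a * exp (-u)) := by gcongr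
          _ = a := by rw [mul_left_comm, ← exp_add]; simp

end SurvivalFunction

lemma integrable_mul_log_of_bounded {α : Type*} [MeasurableSpace α] {μ : Measure α}
    [IsFiniteMeasure μ] {f : α → ℝ} (hf : AEStronglyMeasurable f μ) (h0 : ∀ x, 0 ≤ f x) {C : ℝ}
    (hC : ∀ x, f x ≤ C) :
    Integrable (fun x => f x * log (f x)) μ := by
  obtain ⟨B, hB⟩ := (isCompact_Icc (a := 0) (b := C)).exists_bound_of_continuousOn
    continuous_mul_log.continuousOn
  exact .of_bound (continuous_mul_log.comp_aestronglyMeasurable hf) B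
    (ae_of_all _ fun x => hB _ ⟨h0 x, hC x⟩)

lemma MeasureTheory.MeasurePreserving.entropy_comp {α β : Type*} [MeasurableSpace α]
    [MeasurableSpace β] {μ : Measure α} {ν : Measure β} {e : α ≃ᵐ β}
    (he : MeasurePreserving e μ ν) (f : β → ℝ) :
    entropy μ (fun x => f (e x)) = entropy ν f := by
  simp only [entropy, he.integral_comp' (fun y => f y * log (f y)), he.integral_comp' f]

section Product

variable {α β : Type*} [MeasurableSpace α] [MeasurableSpace β] {μ : Measure α} {ν : Measure β}
  [IsFiniteMeasure μ] [IsFiniteMeasure ν] {f : α × β → ℝ}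

lemma integrable_integral_prod_mul_log (hf : Measurable f) (h0 : ∀ p, 0 ≤ f p) {C : ℝ}
    (hC : ∀ p, f p ≤ C) :
    Integrable (fun x => (∫ y, f (x, y) ∂ν) * log (∫ y, f (x, y) ∂ν)) μ :=
  integrable_mul_log_of_bounded hf.stronglyMeasurable.integral_prod_right'.aestronglyMeasurable
    (fun x => integral_nonneg fun y => h0 (x, y)) fun x => by
      simpa [mul_comm] using integral_mono_of_nonneg (ae_of_all _ fun y => h0 (x, y))
        (integrable_const C) (ae_of_all _ fun y => hC (x, y))

lemma entropy_prod (hf : Measurable f) (h0 : ∀ p, 0 ≤ f p) {C : ℝ} (hC : ∀ p, f p ≤ C) :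
    entropy (μ.prod ν) f
      = ∫ x, entropy ν (fun y => f (x, y)) ∂μ + entropy μ (fun x => ∫ y, f (x, y) ∂ν) := by
  have hfi : Integrable f (μ.prod ν) := .of_bound hf.aestronglyMeasurable C
    (ae_of_all _ fun p => by rw [Real.norm_of_nonneg (h0 p)]; exact hC p)
  have hfl := integrable_mul_log_of_bounded hf.aestronglyMeasurable (μ := μ.prod ν) h0 hC
  simp only [entropy]
  rw [integral_sub hfl.integral_prod_left (integrable_integral_prod_mul_log hf h0 hC),
    integral_prod _ hfl, integral_prod _ hfi]
  ring

lemma entropy_prod_le (hf : Measurable f) (h0 : ∀ p, 0 ≤ f p) {C : ℝ} (hC : ∀ p, f p ≤ C)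
    {U : α → ℝ} {V : β → ℝ} (hU : Integrable U μ) (hV : Integrable V ν)
    (hmarg : entropy μ (fun x => ∫ y, f (x, y) ∂ν) ≤ ∫ x, (∫ y, f (x, y) ∂ν) * U x ∂μ)
    (hslice : ∀ x, entropy ν (fun y => f (x, y)) ≤ ∫ y, f (x, y) * V y ∂ν) :
    entropy (μ.prod ν) f ≤ ∫ p, f p * (U p.1 + V p.2) ∂(μ.prod ν) := by
  have hfC : ∀ᵐ p ∂(μ.prod ν), ‖f p‖ ≤ C :=
    ae_of_all _ fun p => by rw [Real.norm_of_nonneg (h0 p)]; exact hC p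
  have hfU : Integrable (fun p => f p * U p.1) (μ.prod ν) :=
    (hU.comp_fst ν).bdd_mul hf.aestronglyMeasurable hfC
  have hfV : Integrable (fun p => f p * V p.2) (μ.prod ν) :=
    (hV.comp_snd μ).bdd_mul hf.aestronglyMeasurable hfC
  have hfl := integrable_mul_log_of_bounded hf.aestronglyMeasurable (μ := μ.prod ν) h0 hC
  have hslices : ∫ x, entropy ν (fun y => f (x, y)) ∂μ ≤ ∫ x, ∫ y, f (x, y) * V y ∂ν ∂μ :=
    integral_mono (hfl.integral_prod_left.sub (integrable_integral_prod_mul_log hf h0 hC))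
      hfV.integral_prod_left hslice
  simp_rw [mul_add]
  rw [entropy_prod hf h0 hC, integral_add hfU hfV, integral_prod _ hfU, integral_prod _ hfV]
  simp_rw [integral_mul_const]
  linarith

noncomputable def laplaceMeasure : Measure ℝ :=
  volume.withDensity fun x => ENNReal.ofReal (2⁻¹ * exp (-|x|))

lemma laplaceMeasure_le_half_volume (s : Set ℝ) :
    laplaceMeasure s ≤ ENNReal.ofReal 2⁻¹ * volume s := by
  rw [laplaceMeasure, withDensity_apply' _ s, ← setLIntegral_const]
  refine lintegral_mono fun x => ENNReal.ofReal_le_ofReal ?_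
  have : exp (-|x|) ≤ 1 := exp_le_one_iff.mpr (neg_nonpos.mpr (abs_nonneg x))
  linarith

lemma laplaceMeasure_preimage_abs_Ioc_le {s t : ℝ} (hst : s ≤ t) :
    laplaceMeasure (abs ⁻¹' Ioc s t) ≤ ENNReal.ofReal (t - s) := by
  have hsub : abs ⁻¹' Ioc s t ⊆ Ioc s t ∪ Ico (-t) (-s) := by
    intro x ⟨hsx, hxt⟩
    rcases le_total 0 x with hx | hx
    · left; rw [abs_of_nonneg hx] at hsx hxt; exact ⟨hsx, hxt⟩
    · right; rw [abs_of_nonpos hx] at hsx hxt; constructor <;> linarith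
  calc laplaceMeasure (abs ⁻¹' Ioc s t)
      ≤ ENNReal.ofReal 2⁻¹ * (volume (Ioc s t) + volume (Ico (-t) (-s))) :=
        (laplaceMeasure_le_half_volume _).trans
          (mul_le_mul_right ((measure_mono hsub).trans (measure_union_le _ _)) _)
    _ = ENNReal.ofReal (t - s) := by
        rw [Real.volume_Ioc, Real.volume_Ico, ← ENNReal.ofReal_add (by linarith) (by linarith),
          ← ENNReal.ofReal_mul (by norm_num)]
        congr 1; ring

lemma laplaceMeasure_setOf_lt_abs {s : ℝ} (hs : 0 ≤ s) :
    laplaceMeasure {x | s < |x|} = ENNReal.ofReal (exp (-s)) := by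
  have hset : {x : ℝ | s < |x|} = Ioi s ∪ Neg.neg ⁻¹' Ioi s := by
    ext x; simp only [mem_ofPred_eq, mem_union, mem_Ioi, mem_preimage, lt_abs]
  have hhalf : ∫⁻ x in Ioi s, ENNReal.ofReal (2⁻¹ * exp (-|x|))
      = ENNReal.ofReal (2⁻¹ * exp (-s)) := by
    rw [setLIntegral_congr_fun measurableSet_Ioi
        (g := fun x => ENNReal.ofReal 2⁻¹ * ENNReal.ofReal (exp (-x)))
        fun x hx => by rw [abs_of_pos (hs.trans_lt hx), ENNReal.ofReal_mul (by norm_num)],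
      lintegral_const_mul _ (by fun_prop), lintegral_Ioi_exp_neg,
      ← ENNReal.ofReal_mul (by norm_num)]
  have hdisj : Disjoint (Ioi s) (Neg.neg ⁻¹' Ioi s) :=
    Set.disjoint_left.mpr fun x hx hx' => by simp only [mem_Ioi, mem_preimage] at hx hx'; linarith
  rw [laplaceMeasure, withDensity_apply' _ _, hset,
    lintegral_union (measurableSet_Ioi.preimage measurable_neg) hdisj]
  have hneg : ∫⁻ x in Neg.neg ⁻¹' Ioi s, ENNReal.ofReal (2⁻¹ * exp (-|x|))
      = ∫⁻ x in Ioi s, ENNReal.ofReal (2⁻¹ * exp (-|x|)) := by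
    simpa only [abs_neg] using
      (Measure.measurePreserving_neg (volume : Measure ℝ)).setLIntegral_comp_preimage
        measurableSet_Ioi (f := fun x => ENNReal.ofReal (2⁻¹ * exp (-|x|))) (by fun_prop)
  rw [hneg, hhalf, ← ENNReal.ofReal_add (by positivity) (by positivity)]
  congr 1; ring

instance : IsProbabilityMeasure laplaceMeasure := by
  refine ⟨?_⟩
  have hnull : laplaceMeasure {x | 0 < |x|}ᶜ = 0 := by
    have : {x : ℝ | 0 < |x|}ᶜ = {0} := by ext x; simp
    rw [this, laplaceMeasure, withDensity_apply' _ _, Measure.restrict_singleton,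
      measure_singleton, zero_smul, lintegral_zero_measure]
  rw [← measure_congr (ae_eq_univ.mpr hnull), laplaceMeasure_setOf_lt_abs le_rfl]
  simp

lemma integrable_abs_laplaceMeasure : Integrable (fun x : ℝ => |x|) laplaceMeasure := by
  refine ⟨by fun_prop, ?_⟩
  rw [hasFiniteIntegral_iff_ofReal (ae_of_all _ fun x => abs_nonneg x),
    lintegral_eq_lintegral_meas_lt _ (ae_of_all _ fun x => abs_nonneg x) (by fun_prop),
    setLIntegral_congr_fun measurableSet_Ioi fun t ht => laplaceMeasure_setOf_lt_abs (le_of_lt ht),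
    lintegral_Ioi_exp_neg]
  exact ENNReal.ofReal_lt_top

lemma lamR_eq_pi (n : ℕ) : lamR n = Measure.pi fun _ : Fin n => laplaceMeasure := by
  set d : ℝ → ℝ := fun t => 2⁻¹ * exp (-|t|)
  have hd0 : ∀ t, 0 ≤ d t := fun t => by positivity
  have hd : Integrable d := by
    refine ⟨by fun_prop, (hasFiniteIntegral_iff_ofReal (ae_of_all _ hd0)).mpr ?_⟩
    have : laplaceMeasure univ = ∫⁻ t, ENNReal.ofReal (d t) := by
      rw [laplaceMeasure, withDensity_apply _ MeasurableSet.univ, Measure.restrict_univ]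
    simp [← this]
  refine (Measure.pi_eq fun s hs => ?_).symm
  have hdensity : ∀ x : Fin n → ℝ, (univ.pi s).indicator
      (fun x => ENNReal.ofReal (((2 : ℝ) ^ n)⁻¹ * exp (-(∑ i, |x i|)))) x
      = ENNReal.ofReal (∏ i, (s i).indicator d (x i)) := by
    intro x
    by_cases hx : x ∈ univ.pi s
    · rw [indicator_of_mem hx,
        Finset.prod_congr rfl fun i _ => indicator_of_mem (hx i (mem_univ i)) d,
        Finset.prod_mul_distrib, ← exp_sum, Finset.prod_const, Finset.card_univ,
        Fintype.card_fin, inv_pow, Finset.sum_neg_distrib]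
    · obtain ⟨i, hi⟩ : ∃ i, x i ∉ s i := by simpa [mem_univ_pi] using hx
      rw [indicator_of_notMem hx,
        Finset.prod_eq_zero (Finset.mem_univ i) (indicator_of_notMem hi d), ENNReal.ofReal_zero]
  rw [lamR, withDensity_apply _ (MeasurableSet.univ_pi hs),
    ← lintegral_indicator (MeasurableSet.univ_pi hs)]
  simp_rw [hdensity]
  rw [← ofReal_integral_eq_lintegral_ofReal, volume_pi, integral_fintype_prod_eq_prod,
    ENNReal.ofReal_prod_of_nonneg]
  · refine Finset.prod_congr rfl fun i _ => ?_
    rw [integral_indicator (hs i), ofReal_integral_eq_lintegral_ofReal hd.integrableOn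
      (ae_of_all _ hd0), laplaceMeasure, withDensity_apply _ (hs i)]
  · exact fun i _ => integral_nonneg (indicator_nonneg fun t _ => hd0 t)
  · rw [volume_pi]
    exact Integrable.fintype_prod fun i => hd.indicator (hs i)
  · exact ae_of_all _ fun x =>
      Finset.prod_nonneg fun i _ => indicator_nonneg (fun t _ => hd0 t) _

section AbsLaw

variable {g : ℝ → ℝ}

noncomputable def absLaw (g : ℝ → ℝ) : Measure ℝ :=
  (laplaceMeasure.withDensity fun x => ENNReal.ofReal (g x)).map abs

lemma absLaw_apply {B : Set ℝ} (hB : MeasurableSet B) :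
    absLaw g B = ∫⁻ x in abs ⁻¹' B, ENNReal.ofReal (g x) ∂laplaceMeasure := by
  rw [absLaw, Measure.map_apply measurable_abs hB, withDensity_apply' _ _]

lemma ae_absLaw (hg : Measurable g) {p : ℝ → Prop} (hp : MeasurableSet {t | p t})
    (h : ∀ x, 0 < g x → p |x|) :
    ∀ᵐ t ∂absLaw g, p t := by
  rw [absLaw, ae_map_iff measurable_abs.aemeasurable hp, ae_withDensity_iff (by fun_prop)]
  exact ae_of_all _ fun x hx => h x (by simpa using hx)

lemma lintegral_absLaw (hg : Measurable g) {F : ℝ → ℝ≥0∞} (hF : Measurable F) :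
    ∫⁻ t, F t ∂absLaw g = ∫⁻ x, ENNReal.ofReal (g x) * F |x| ∂laplaceMeasure := by
  rw [absLaw, lintegral_map hF measurable_abs]
  exact lintegral_withDensity_eq_lintegral_mul _ (by fun_prop) (hF.comp measurable_abs)

lemma isFiniteMeasure_absLaw (hg : Integrable g laplaceMeasure) : IsFiniteMeasure (absLaw g) :=
  haveI := isFiniteMeasure_withDensity_ofReal hg.2
  Measure.isFiniteMeasure_map _ _

lemma measureReal_absLaw_univ (hg : Integrable g laplaceMeasure) (h0 : ∀ x, 0 ≤ g x) :
    (absLaw g).real univ = ∫ x, g x ∂laplaceMeasure := by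
  rw [measureReal_def, absLaw_apply MeasurableSet.univ, preimage_univ, Measure.restrict_univ,
    ← ofReal_integral_eq_lintegral_ofReal hg (ae_of_all _ h0),
    ENNReal.toReal_ofReal (integral_nonneg h0)]

lemma ofReal_mul_exp_neg_abs_le_absLaw_Ioi (hg : Measurable g)
    (hmono : ∀ x y, |y| ≤ |x| → g y ≤ g x) (x : ℝ) :
    ENNReal.ofReal (g x * exp (-|x|)) ≤ absLaw g (Ioi |x|) := by
  rw [absLaw_apply measurableSet_Ioi, ENNReal.ofReal_mul' (exp_pos _).le,
    ← laplaceMeasure_setOf_lt_abs (abs_nonneg x), ← setLIntegral_const]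
  exact setLIntegral_mono (by fun_prop) fun y hy =>
    ENNReal.ofReal_le_ofReal (hmono y x (le_of_lt hy))

lemma absLaw_Ioc_le {C : ℝ} (hC : ∀ x, g x ≤ C) {s t : ℝ} (hst : s ≤ t) :
    absLaw g (Ioc s t) ≤ ENNReal.ofReal (C * (t - s)) := by
  rw [absLaw_apply measurableSet_Ioc, ENNReal.ofReal_mul' (by linarith)]
  calc ∫⁻ x in abs ⁻¹' Ioc s t, ENNReal.ofReal (g x) ∂laplaceMeasure
      ≤ ∫⁻ _ in abs ⁻¹' Ioc s t, ENNReal.ofReal C ∂laplaceMeasure :=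
        lintegral_mono fun x => ENNReal.ofReal_le_ofReal (hC x)
    _ ≤ ENNReal.ofReal C * ENNReal.ofReal (t - s) := by
        rw [setLIntegral_const]; gcongr; exact laplaceMeasure_preimage_abs_Ioc_le hst

lemma continuous_absLaw_Ioi [IsFiniteMeasure (absLaw g)] {C : ℝ} (hC : ∀ x, g x ≤ C) :
    Continuous fun t => (absLaw g).real (Ioi t) :=
  (lipschitzWith_measureReal_Ioi (K := C.toNNReal) fun s t hst =>
    (absLaw_Ioc_le hC hst).trans
      (ENNReal.ofReal_le_ofReal
        (mul_le_mul_of_nonneg_right C.le_coe_toNNReal (by linarith)))).continuous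

lemma measureReal_absLaw_univ_le_integral [IsFiniteMeasure (absLaw g)] (hg : Measurable g)
    (h0 : ∀ x, 0 ≤ g x) (hcont : Continuous fun t => (absLaw g).real (Ioi t))
    (hpos : ∀ x, 0 < g x → 0 < (absLaw g).real (Ioi |x|))
    (hint : Integrable (fun x => g x * log ((absLaw g).real univ / (absLaw g).real (Ioi |x|)))
      laplaceMeasure) :
    (absLaw g).real univ
      ≤ ∫ x, g x * log ((absLaw g).real univ / (absLaw g).real (Ioi |x|)) ∂laplaceMeasure := by
  have hR : Measurable fun t => log ((absLaw g).real univ / (absLaw g).real (Ioi t)) :=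
    (antitone_measureReal_Ioi.measurable.const_div _).log
  have hnn : ∀ x, 0 ≤ g x * log ((absLaw g).real univ / (absLaw g).real (Ioi |x|)) := fun x =>
    mul_nonneg (h0 x) (log_div_nonneg measureReal_nonneg (measureReal_mono (subset_univ _)))
  rw [← ENNReal.ofReal_le_ofReal_iff (integral_nonneg hnn),
    ofReal_integral_eq_lintegral_ofReal hint (ae_of_all _ hnn)]
  refine (measureReal_univ_le_lintegral_log_div_measureReal_Ioi hcont ?_).trans_eq ?_
  · exact ae_absLaw hg (measurableSet_lt measurable_const antitone_measureReal_Ioi.measurable) hpos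
  · rw [lintegral_absLaw hg hR.ennreal_ofReal]
    simp_rw [ENNReal.ofReal_mul (h0 _)]

end AbsLaw

theorem entropy_laplaceMeasure_le {g : ℝ → ℝ} (hg : Measurable g) (h0 : ∀ x, 0 ≤ g x) {C : ℝ}
    (hC : ∀ x, g x ≤ C) (hmono : ∀ x y, |y| ≤ |x| → g y ≤ g x) :
    entropy laplaceMeasure g ≤ ∫ x, g x * (|x| - 1) ∂laplaceMeasure := by
  have hgC : ∀ x, ‖g x‖ ≤ C := fun x => by rw [norm_of_nonneg (h0 x)]; exact hC x
  have hgi : Integrable g laplaceMeasure := .of_bound hg.aestronglyMeasurable C (ae_of_all _ hgC)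
  have := isFiniteMeasure_absLaw hgi
  set R : ℝ → ℝ := fun t => (absLaw g).real (Ioi t)
  set a := (absLaw g).real univ
  have ha : a = ∫ x, g x ∂laplaceMeasure := measureReal_absLaw_univ hgi h0
  have htail : ∀ x, g x * exp (-|x|) ≤ R |x| := fun x =>
    (ENNReal.ofReal_le_iff_le_toReal (measure_ne_top _ _)).mp
      (ofReal_mul_exp_neg_abs_le_absLaw_Ioi hg hmono x)
  have hpt : ∀ x, g x * log (g x) - g x * log a ≤ g x * |x| - g x * log (a / R |x|) := fun x =>
    mul_log_sub_mul_log_le (h0 x) (htail x) (measureReal_mono (subset_univ _))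
  have hgl : Integrable (fun x => g x * log (g x)) laplaceMeasure :=
    integrable_mul_log_of_bounded hg.aestronglyMeasurable h0 hC
  have hga : Integrable (fun x => g x * |x|) laplaceMeasure :=
    integrable_abs_laplaceMeasure.bdd_mul hg.aestronglyMeasurable (ae_of_all _ hgC)
  have hψ : Integrable (fun x => g x * log (a / R |x|)) laplaceMeasure := by
    refine (hga.sub (hgl.sub (hgi.mul_const (log a)))).mono' ?_ (ae_of_all _ fun x => ?_)
    · exact hg.aestronglyMeasurable.mul (((antitone_measureReal_Ioi.measurable.comp
        measurable_abs).const_div a).log.aestronglyMeasurable)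
    · rw [norm_of_nonneg (mul_nonneg (h0 x)
        (log_div_nonneg measureReal_nonneg (measureReal_mono (subset_univ _))))]
      simp only [Pi.sub_apply]
      linarith [hpt x]
  have hkey : a ≤ ∫ x, g x * log (a / R |x|) ∂laplaceMeasure :=
    measureReal_absLaw_univ_le_integral hg h0 (continuous_absLaw_Ioi hC)
      (fun x hx => (by positivity : 0 < g x * exp (-|x|)).trans_le (htail x)) hψ
  calc entropy laplaceMeasure g
      = ∫ x, (g x * log (g x) - g x * log a) ∂laplaceMeasure := by
        rw [integral_sub hgl (hgi.mul_const _), integral_mul_const, entropy, ← ha]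
    _ ≤ ∫ x, (g x * |x| - g x * log (a / R |x|)) ∂laplaceMeasure :=
        integral_mono (hgl.sub (hgi.mul_const _)) (hga.sub hψ) hpt
    _ ≤ ∫ x, (g x * |x| - g x) ∂laplaceMeasure := by
        rw [integral_sub hga hψ, integral_sub hga hgi, ← ha]; linarith
    _ = ∫ x, g x * (|x| - 1) ∂laplaceMeasure := by simp_rw [mul_sub, mul_one]

lemma sum_abs_cons {n : ℕ} (x : ℝ) (y : Fin n → ℝ) :
    ∑ i, |(Fin.cons x y : Fin (n + 1) → ℝ) i| = |x| + ∑ i, |y i| := by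
  simp [Fin.sum_univ_succ]

lemma abs_cons_le {n : ℕ} {x x' : ℝ} {y y' : Fin n → ℝ} (hx : |x'| ≤ |x|)
    (hy : ∀ i, |y' i| ≤ |y i|) (i : Fin (n + 1)) :
    |(Fin.cons x' y' : Fin (n + 1) → ℝ) i| ≤ |(Fin.cons x y : Fin (n + 1) → ℝ) i| :=
  Fin.cases hx hy i

lemma integrable_sum_abs_pi_laplaceMeasure (n : ℕ) :
    Integrable (fun y : Fin n → ℝ => ∑ i, |y i|) (Measure.pi fun _ => laplaceMeasure) :=
  integrable_finsetSum _ fun i _ =>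
    (measurePreserving_eval (fun _ => laplaceMeasure) i).integrable_comp_of_integrable
      integrable_abs_laplaceMeasure

theorem entropy_pi_laplaceMeasure_le (n : ℕ) {g : (Fin n → ℝ) → ℝ} (hg : Measurable g)
    (h0 : ∀ x, 0 ≤ g x) {C : ℝ} (hC : ∀ x, g x ≤ C)
    (hmono : ∀ x y : Fin n → ℝ, (∀ i, |y i| ≤ |x i|) → g y ≤ g x) :
    entropy (Measure.pi fun _ => laplaceMeasure) g
      ≤ ∫ x, g x * ((∑ i, |x i|) - n) ∂(Measure.pi fun _ => laplaceMeasure) := by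
  induction n with
  | zero =>
    rw [show g = fun _ => g default from funext fun x => congrArg g (Subsingleton.elim x default)]
    simp [entropy]
  | succ n ih =>
    set ν := Measure.pi fun _ : Fin n => laplaceMeasure
    set e := MeasurableEquiv.piFinSuccAbove (fun _ : Fin (n + 1) => ℝ) 0
    have he : MeasurePreserving e.symm (laplaceMeasure.prod ν)
        (Measure.pi fun _ => laplaceMeasure) :=
      (measurePreserving_piFinSuccAbove (fun _ => laplaceMeasure) 0).symm
    have he_apply : ∀ p, e.symm p = Fin.cons p.1 p.2 := fun p => by
      simp [e, MeasurableEquiv.piFinSuccAbove_symm_apply, Fin.insertNthEquiv, Fin.insertNth_zero']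
    set f : ℝ × (Fin n → ℝ) → ℝ := fun p => g (Fin.cons p.1 p.2)
    have hf : Measurable f := by
      convert hg.comp e.symm.measurable using 1
      exact funext fun p => congrArg g (he_apply p).symm
    have hslice : ∀ x, Integrable (fun y => f (x, y)) ν := fun x =>
      .of_bound (hf.comp measurable_prodMk_left).aestronglyMeasurable C
        (ae_of_all _ fun y => by rw [Real.norm_of_nonneg (h0 _)]; exact hC _)
    have hmarg := entropy_laplaceMeasure_le (C := C) (g := fun x => ∫ y, f (x, y) ∂ν)
      hf.stronglyMeasurable.integral_prod_right'.measurable (fun x => integral_nonneg fun y => h0 _)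
      (fun x => (integral_mono (hslice x) (integrable_const C) fun y => hC _).trans_eq (by simp))
      fun x x' hx => integral_mono (hslice x') (hslice x) fun y =>
        hmono _ _ (abs_cons_le hx fun i => le_rfl)
    have key := entropy_prod_le hf (fun p => h0 _) (fun p => hC _)
      (integrable_abs_laplaceMeasure.sub (integrable_const 1))
      ((integrable_sum_abs_pi_laplaceMeasure n).sub (integrable_const _)) hmarg fun x =>
        ih (hf.comp measurable_prodMk_left) (fun y => h0 _) (fun y => hC _)
          fun y y' hy => hmono _ _ (abs_cons_le le_rfl hy)
    rw [← he.entropy_comp, ← he.integral_comp']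
    simp_rw [he_apply, sum_abs_cons]
    convert key using 3 with p
    simp only [f, Pi.sub_apply]
    push_cast
    ring

theorem entropy_le_integral_exponential_general
    (n : ℕ) (g : (Fin n → ℝ) → ℝ)
    (hg_meas : Measurable g)
    (hg_nonneg : ∀ x, 0 ≤ g x)
    (hg_bdd : ∃ C : ℝ, ∀ x, g x ≤ C)
    (hg_mono : ∀ x y : Fin n → ℝ, (∀ i, |y i| ≤ |x i|) → g y ≤ g x) :
    entropy (lamR n) g ≤ ∫ x, g x * ((∑ i, |x i|) - n) ∂(lamR n) := by
  obtain ⟨C, hC⟩ := hg_bdd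
  rw [lamR_eq_pi]
  exact entropy_pi_laplaceMeasure_le n hg_meas hg_nonneg hC hg_mono

/-- **Multidimensional entropy inequality for the exponential measure.** For a
bounded measurable `g : ℝⁿ → ℝ₊` which is even in each coordinate and monotone
with respect to the absolute values of the coordinates,
`Ent_(λ_n) g ≤ ∫ g(x)·(|x|₁ - n) dλ_n(x)`. -/
theorem entropy_le_integral_exponential
    (n : ℕ) (g : (Fin n → ℝ) → ℝ)
    (hg_meas : Measurable g)
    (hg_nonneg : ∀ x, 0 ≤ g x)
    (hg_bdd : ∃ C : ℝ, ∀ x, g x ≤ C)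
    (hg_sign : ∀ (x ε : Fin n → ℝ), (∀ i, ε i = 1 ∨ ε i = -1) →
      g (fun i => ε i * x i) = g x)
    (hg_mono : ∀ x y : Fin n → ℝ, (∀ i, |y i| ≤ |x i|) → g y ≤ g x) :
    entropy (lamR n) g ≤ ∫ x, g x * ((∑ i, |x i|) - n) ∂(lamR n) :=
  entropy_le_integral_exponential_general n g hg_meas hg_nonneg hg_bdd hg_mono
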